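/- Let T,c ∈ [0,∞), α ∈ [0,2), let (Ω,ℱ,ℙ) be a probability space, and let W: [0,T]×Ω → ℝ be a one-dimensional standard Brownian motion with continuous sample paths. Then (i) the map Ω ∋ ω ↦ sup_{t∈[0,T]} |W(t,ω)|^α ∈ ℝ is ℱ/ℬ(ℝ)-measurable, and (ii) E[exp(c·sup_{t∈[0,T]} |W(t)|^α)] < ∞. -/

import Mathlib

/-!
Sample paths are continuous, so the supremum of `|W|` over `[0, T]` is the increasing limit of its
maxima over the dyadic grids `k T / 2 ^ N`; this gives measurability. On a grid the increments of
`W` are independent centred Gaussians of variance at most `T`, so Etemadi's maximal inequality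
bounds the tail of the grid maximum by three times a Gaussian tail, uniformly in the grid. Hence
`P (s ≤ sup |W|) ≤ 6 exp (-s² / (72 v))` for every `v ≥ T`, and since `α < 2` the weights
`exp (|c| (n + 1) ^ α)` are summable against `P (n ≤ sup |W|)`.
-/

open MeasureTheory ProbabilityTheory Filter
open scoped ENNReal NNReal

noncomputable section

/-- `W` is a one-dimensional standard Brownian motion on `[0,T]`:
`W 0 = 0` almost surely, `W` has independent increments, every increment
`W t - W s` is centered Gaussian with variance `t - s`, and all sample paths
are continuous. -/
def IsStandardBM1 {Ω : Type*} [MeasurableSpace Ω] (P : Measure Ω) (T : ℝ)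
    (W : ℝ → Ω → ℝ) : Prop :=
  (∀ t ∈ Set.Icc (0 : ℝ) T, Measurable (W t)) ∧
  (∀ᵐ ω ∂P, W 0 ω = 0) ∧
  (∀ (n : ℕ) (t : Fin (n + 1) → ℝ), Monotone t → (∀ i, t i ∈ Set.Icc (0 : ℝ) T) →
    iIndepFun
      (fun (i : Fin n) ω => W (t i.succ) ω - W (t i.castSucc) ω) P) ∧
  (∀ s t : ℝ, 0 ≤ s → s < t → t ≤ T →
    P.map (fun ω => W t ω - W s ω) = gaussianReal 0 ((t - s).toNNReal)) ∧
  (∀ ω, ContinuousOn (fun t => W t ω) (Set.Icc (0 : ℝ) T))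

open Real Finset Topology Asymptotics

lemma hasSubgaussianMGF_id_gaussianReal {v c : ℝ≥0} (hvc : v ≤ c) :
    HasSubgaussianMGF id c (gaussianReal 0 v) where
  integrable_exp_mul := integrable_exp_mul_gaussianReal
  mgf_le t := by
    simp only [mgf_id_gaussianReal, zero_mul, zero_add]
    gcongr

lemma ProbabilityTheory.HasSubgaussianMGF.measure_le_abs_le {Ω : Type*} [MeasurableSpace Ω]
    {μ : Measure Ω} [IsFiniteMeasure μ] {X : Ω → ℝ} {c : ℝ≥0} (h : HasSubgaussianMGF X c μ) {ε : ℝ}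
    (hε : 0 ≤ ε) : μ {ω | ε ≤ |X ω|} ≤ 2 * ENNReal.ofReal (exp (-ε ^ 2 / (2 * c))) := by
  have h_right : μ {ω | ε ≤ X ω} ≤ ENNReal.ofReal (exp (-ε ^ 2 / (2 * c))) := by
    rw [← ofReal_measureReal]
    exact ENNReal.ofReal_le_ofReal (h.measure_ge_le hε)
  have h_left : μ {ω | ε ≤ -X ω} ≤ ENNReal.ofReal (exp (-ε ^ 2 / (2 * c))) := by
    rw [← ofReal_measureReal]
    exact ENNReal.ofReal_le_ofReal (h.neg.measure_ge_le hε)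
  calc μ {ω | ε ≤ |X ω|} = μ ({ω | ε ≤ X ω} ∪ {ω | ε ≤ -X ω}) := by
        congr 1; ext ω; exact le_abs (b := X ω)
    _ ≤ _ := (measure_union_le _ _).trans (by rw [two_mul]; gcongr)

section Etemadi

variable {Ω : Type*}

lemma measurableSet_disjointed_le_abs {m : MeasurableSpace Ω} {S : ℕ → Ω → ℝ} {a : ℝ} {k : ℕ}
    (hS : ∀ j ≤ k, Measurable[m] (S j)) :
    MeasurableSet[m] (disjointed (fun j => {ω | a ≤ |S j ω|}) k) := by
  rw [disjointed_eq_inter_compl]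
  exact (measurable_abs.comp (hS k le_rfl) measurableSet_Ici).inter <| .iInter fun j =>
    .iInter fun hj => (measurable_abs.comp (hS j hj.le) measurableSet_Ici).compl

variable {n : ℕ} {X : ℕ → Ω → ℝ}

lemma measurable_sum_iSup_comap {s : Set (Fin n)} {I : Finset ℕ}
    (hI : ∀ i ∈ I, ∃ h : i < n, (⟨i, h⟩ : Fin n) ∈ s) :
    Measurable[⨆ j ∈ s, MeasurableSpace.comap (X j) inferInstance] fun ω => ∑ i ∈ I, X i ω := by
  refine Finset.measurable_sum I fun i hi => ?_
  obtain ⟨h, hs⟩ := hI i hi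
  exact (comap_measurable (X (⟨i, h⟩ : Fin n))).mono
    (le_iSup₂ (f := fun j (_ : j ∈ s) => MeasurableSpace.comap (X j) inferInstance) _ hs) le_rfl

variable [MeasurableSpace Ω] {P : Measure Ω}

lemma ProbabilityTheory.iIndepFun.indep_iSup_comap_lt_ge (hX : ∀ i : Fin n, Measurable (X i))
    (hind : iIndepFun (fun i : Fin n => X i) P) (k : ℕ) :
    Indep (⨆ i ∈ {i : Fin n | (i : ℕ) < k}, MeasurableSpace.comap (X i) inferInstance)
      (⨆ i ∈ {i : Fin n | k ≤ (i : ℕ)}, MeasurableSpace.comap (X i) inferInstance) P :=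
  indep_iSup_of_disjoint (fun i => (hX i).comap_le) hind.iIndep
    (Set.disjoint_left.2 fun _ (h₁ : _ < k) (h₂ : k ≤ _) => h₁.not_ge h₂)

lemma ProbabilityTheory.iIndepFun.measure_disjointed_inter_eq_mul
    (hX : ∀ i : Fin n, Measurable (X i)) (hind : iIndepFun (fun i : Fin n => X i) P)
    (a b : ℝ) {k : ℕ} (hkn : k ≤ n) :
    P (disjointed (fun j => {ω | a ≤ |∑ i ∈ range j, X i ω|}) k
        ∩ {ω | b ≤ |∑ i ∈ range n, X i ω - ∑ i ∈ range k, X i ω|})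
      = P (disjointed (fun j => {ω | a ≤ |∑ i ∈ range j, X i ω|}) k)
        * P {ω | b ≤ |∑ i ∈ range n, X i ω - ∑ i ∈ range k, X i ω|} := by
  refine (Indep_iff _ _ _).1 (hind.indep_iSup_comap_lt_ge hX k) _ _ ?past ?future
  case past =>
    exact measurableSet_disjointed_le_abs fun j hjk => measurable_sum_iSup_comap fun i hi => by
      have := mem_range.1 hi
      exact ⟨by omega, show i < k by omega⟩
  case future =>
    simp_rw [← sum_Ico_eq_sub _ hkn]
    refine measurable_abs.comp (measurable_sum_iSup_comap fun i hi => ?_) measurableSet_Ici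
    exact ⟨(mem_Ico.1 hi).2, show k ≤ i from (mem_Ico.1 hi).1⟩

lemma measure_two_mul_le_abs_sub_le {μ : Measure Ω} (f g : Ω → ℝ) (r : ℝ) :
    μ {ω | 2 * r ≤ |f ω - g ω|} ≤ μ {ω | r ≤ |f ω|} + μ {ω | r ≤ |g ω|} := by
  refine (measure_mono fun ω (hω : 2 * r ≤ _) => ?_).trans (measure_union_le _ _)
  by_contra h
  simp only [Set.mem_union, Set.mem_ofPred_eq, not_or, not_le] at h
  linarith [abs_sub (f ω) (g ω)]

theorem etemadi_maximal_ineq [IsProbabilityMeasure P] (hX : ∀ i : Fin n, Measurable (X i))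
    (hind : iIndepFun (fun i : Fin n => X i) P) {r : ℝ} {ε : ℝ≥0∞}
    (htail : ∀ k ≤ n, P {ω | r ≤ |∑ i ∈ range k, X i ω|} ≤ ε) :
    P {ω | ∃ k ≤ n, 3 * r ≤ |∑ i ∈ range k, X i ω|} ≤ 3 * ε := by
  set S : ℕ → Ω → ℝ := fun k ω => ∑ i ∈ range k, X i ω
  -- `ω ∈ A k` iff `|S j ω|` first reaches `3 r` at `j = k`
  set A := disjointed fun k => {ω | 3 * r ≤ |S k ω|}
  set B : ℕ → Set Ω := fun k => {ω | 2 * r ≤ |S n ω - S k ω|}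
  set L : Set Ω := {ω | r ≤ |S n ω|}
  set R := range (n + 1)
  have hR : ∀ k ∈ R, k ≤ n := fun k hk => Nat.lt_succ_iff.1 (mem_range.1 hk)
  have hS : ∀ k ≤ n, Measurable (S k) := fun k hk =>
    Finset.measurable_sum _ fun i hi => hX ⟨i, by have := mem_range.1 hi; omega⟩
  have hA : ∀ k ∈ R, MeasurableSet (A k) := fun k hk =>
    measurableSet_disjointed_le_abs fun j hj => hS j (hj.trans (hR k hk))
  have hA_disj : (R : Set ℕ).PairwiseDisjoint A := (disjoint_disjointed _).set_pairwise _
  have hU : P (⋃ k ∈ R, A k) = ∑ k ∈ R, P (A k) := measure_biUnion_finset hA_disj hA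
  have hUL : P (⋃ k ∈ R, A k ∩ L) = ∑ k ∈ R, P (A k ∩ L) :=
    measure_biUnion_finset (hA_disj.mono fun _ => Set.inter_subset_left) fun k hk =>
      (hA k hk).inter (measurable_abs.comp (hS n le_rfl) measurableSet_Ici)
  have hB_le : ∀ k ≤ n, P (B k) ≤ 2 * ε := fun k hkn =>
    (measure_two_mul_le_abs_sub_le _ _ r).trans
      (by rw [two_mul]; exact add_le_add (htail n le_rfl) (htail k hkn))
  have hA_sub : ∀ k, A k ⊆ (A k ∩ B k) ∪ (A k ∩ L) := fun k ω hω => by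
    by_cases hB : ω ∈ B k
    · exact Or.inl ⟨hω, hB⟩
    · have h3 : 3 * r ≤ |S k ω| := disjointed_subset _ k hω
      simp only [B, Set.mem_ofPred_eq, not_le] at hB
      refine Or.inr ⟨hω, show r ≤ |S n ω| from ?_⟩
      linarith [abs_sub_abs_le_abs_sub (S k ω) (S n ω), abs_sub_comm (S n ω) (S k ω)]
  have h_event : {ω | ∃ k ≤ n, 3 * r ≤ |S k ω|} = ⋃ k ∈ R, A k := by
    rw [biUnion_range_succ_disjointed, partialSups_eq_biSup]
    ext ω
    simp
  calc P {ω | ∃ k ≤ n, 3 * r ≤ |S k ω|} = ∑ k ∈ R, P (A k) := by rw [h_event, hU]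
    _ ≤ ∑ k ∈ R, (P (A k ∩ B k) + P (A k ∩ L)) :=
      sum_le_sum fun k _ => (measure_mono (hA_sub k)).trans (measure_union_le _ _)
    _ = ∑ k ∈ R, P (A k) * P (B k) + P (⋃ k ∈ R, A k ∩ L) := by
      rw [sum_add_distrib, hUL, sum_congr rfl fun k hk =>
        hind.measure_disjointed_inter_eq_mul hX (3 * r) (2 * r) (hR k hk)]
    _ ≤ ∑ k ∈ R, P (A k) * (2 * ε) + P L := by
      gcongr with k hk
      · exact hB_le k (hR k hk)
      · exact Set.iUnion₂_subset fun _ _ => Set.inter_subset_right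
    _ ≤ 1 * (2 * ε) + ε := by
      rw [← sum_mul, ← hU]
      gcongr
      exacts [prob_le_one, htail n le_rfl]
    _ = 3 * ε := by ring

end Etemadi

section Grid

variable {f : ℝ → ℝ} {T : ℝ}

def gridMax (f : ℝ → ℝ) (T : ℝ) (n : ℕ) : ℝ :=
  (range (n + 1)).sup' nonempty_range_add_one fun k => f (k * T / n)

lemma grid_mem_Icc (hT : 0 ≤ T) {k n : ℕ} (hk : k ≤ n) : (k : ℝ) * T / n ∈ Set.Icc 0 T := by
  refine ⟨by positivity, ?_⟩
  rw [mul_comm, mul_div_assoc]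
  exact mul_le_of_le_one_right hT (div_le_one_of_le₀ (by exact_mod_cast hk) (by positivity))

lemma exists_abs_sub_grid_le (hT : 0 ≤ T) {x : ℝ} (hx : x ∈ Set.Icc 0 T) {n : ℕ} (hn : 0 < n) :
    ∃ k ≤ n, |x - k * T / n| ≤ T / n := by
  rcases hT.eq_or_lt with rfl | hT
  · exact ⟨0, n.zero_le, by simp [le_antisymm hx.2 hx.1]⟩
  have hn' : (0 : ℝ) < n := by exact_mod_cast hn
  set k := ⌊x * n / T⌋₊
  have hk_le : (k : ℝ) ≤ x * n / T := Nat.floor_le (by have := hx.1; positivity)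
  have hk_lt : x * n / T < k + 1 := Nat.lt_floor_add_one _
  refine ⟨k, Nat.floor_le_of_le ?_, ?_⟩
  · rw [div_le_iff₀ hT]; nlinarith [hx.2]
  · rw [le_div_iff₀ hT] at hk_le
    rw [div_lt_iff₀ hT] at hk_lt
    have h_below : (k : ℝ) * T / n ≤ x := by rw [div_le_iff₀ hn']; linarith
    have h_above : x ≤ k * T / n + T / n := by rw [← add_div, le_div_iff₀ hn']; nlinarith
    rw [abs_le]
    constructor <;> linarith [div_nonneg hT.le hn'.le]

lemma gridMax_le_sSup (hT : 0 ≤ T) (hf : BddAbove (f '' Set.Icc 0 T)) (n : ℕ) :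
    gridMax f T n ≤ sSup (f '' Set.Icc 0 T) :=
  sup'_le _ _ fun _ hk =>
    le_csSup hf (Set.mem_image_of_mem f (grid_mem_Icc hT (Nat.lt_succ_iff.1 (mem_range.1 hk))))

lemma gridMax_le_gridMax_mul (n : ℕ) {m : ℕ} (hm : m ≠ 0) : gridMax f T n ≤ gridMax f T (n * m) :=
  sup'_le _ _ fun k hk => le_sup'_of_le _ (b := k * m)
    (mem_range.2 (by have := mem_range.1 hk; nlinarith [Nat.pos_of_ne_zero hm]))
    (by push_cast; rw [mul_right_comm, mul_div_mul_right _ _ (by exact_mod_cast hm)])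

lemma monotone_gridMax_two_pow : Monotone fun N => gridMax f T (2 ^ N) :=
  monotone_nat_of_le_succ fun N => by
    rw [pow_succ]
    exact gridMax_le_gridMax_mul _ two_ne_zero

lemma sSup_image_Icc_eq_iSup_gridMax (hT : 0 ≤ T) (hf : ContinuousOn f (Set.Icc 0 T)) :
    sSup (f '' Set.Icc 0 T) = ⨆ N : ℕ, gridMax f T (2 ^ N) := by
  have hbdd : BddAbove (f '' Set.Icc 0 T) := (isCompact_Icc.image_of_continuousOn hf).bddAbove
  have hle : ∀ N : ℕ, gridMax f T (2 ^ N) ≤ sSup (f '' Set.Icc 0 T) :=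
    fun N => gridMax_le_sSup hT hbdd _
  have hbdd' : BddAbove (Set.range fun N : ℕ => gridMax f T (2 ^ N)) :=
    ⟨_, Set.forall_mem_range.2 hle⟩
  refine le_antisymm (csSup_le ((Set.nonempty_Icc.2 hT).image f) ?_) (ciSup_le hle)
  rintro _ ⟨x, hx, rfl⟩
  choose k hk hnear using fun N : ℕ => exists_abs_sub_grid_le hT hx (pow_pos two_pos N)
  have hp : Tendsto (fun N => (k N : ℝ) * T / (2 ^ N : ℕ)) atTop (𝓝[Set.Icc 0 T] x) := by
    refine tendsto_nhdsWithin_iff.2 ⟨?_, .of_forall fun N => grid_mem_Icc hT (hk N)⟩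
    have hlim : Tendsto (fun N : ℕ => T / (2 ^ N : ℕ)) atTop (𝓝 0) := by
      push_cast
      exact tendsto_const_nhds.div_atTop (tendsto_pow_atTop_atTop_of_one_lt one_lt_two)
    refine tendsto_iff_dist_tendsto_zero.2 (squeeze_zero (fun _ => dist_nonneg) (fun N => ?_) hlim)
    rw [dist_comm, Real.dist_eq]
    exact hnear N
  refine le_of_tendsto ((hf x hx).tendsto.comp hp) (.of_forall fun N => ?_)
  exact (le_sup' _ (mem_range.2 (Nat.lt_succ_of_le (hk N)))).trans (le_ciSup hbdd' N)

end Grid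

section ExpIntegrability

lemma eventually_mul_add_one_rpow_sub_le {a α : ℝ} (ha : 0 < a) (hα0 : 0 ≤ α) (hα2 : α < 2)
    (c : ℝ) : ∀ᶠ n : ℕ in atTop, c * ((n : ℝ) + 1) ^ α - a * (n : ℝ) ^ 2 ≤ -n := by
  have h_rpow : (fun x : ℝ => x ^ α) =o[atTop] fun x => x ^ 2 := by
    refine (isLittleO_iff_tendsto' ?_).2 ?_
    · filter_upwards [eventually_gt_atTop 0] with x hx h
      exact absurd h (by positivity)
    · refine (tendsto_rpow_neg_atTop (by linarith : 0 < 2 - α)).congr' ?_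
      filter_upwards [eventually_gt_atTop 0] with x hx
      rw [← rpow_natCast, ← rpow_sub hx]
      norm_num
  have h_shift : (fun x : ℝ => (x + 1) ^ α) =O[atTop] fun x => x ^ α := by
    refine IsBigO.rpow hα0 (eventually_ge_atTop 0) ?_
    exact (isBigO_refl _ _).add (isLittleO_const_id_atTop 1).isBigO
  have h_id : (fun x : ℝ => x) =o[atTop] fun x => x ^ 2 := by
    simpa using isLittleO_pow_pow_atTop_of_lt (𝕜 := ℝ) one_lt_two
  have h := ((h_shift.trans_isLittleO h_rpow).const_mul_left c).add h_id
  filter_upwards [tendsto_natCast_atTop_atTop.eventually (h.bound ha)] with n hn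
  have := (le_abs_self _).trans hn
  rw [Real.norm_eq_abs, abs_of_nonneg (by positivity)] at this
  linarith

lemma summable_exp_mul_add_one_rpow_sub {a α : ℝ} (ha : 0 < a) (hα0 : 0 ≤ α) (hα2 : α < 2)
    (c : ℝ) : Summable fun n : ℕ => exp (c * ((n : ℝ) + 1) ^ α - a * (n : ℝ) ^ 2) := by
  refine summable_exp_neg_nat.of_norm_bounded_eventually_nat ?_
  filter_upwards [eventually_mul_add_one_rpow_sub_le ha hα0 hα2 c] with n hn
  rw [Real.norm_of_nonneg (exp_pos _).le]
  exact exp_le_exp.2 hn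

variable {Ω : Type*} [MeasurableSpace Ω] {μ : Measure Ω} {Y : Ω → ℝ}

lemma lintegral_exp_mul_rpow_le_tsum (hY : Measurable Y) (hY0 : ∀ ω, 0 ≤ Y ω) (c : ℝ)
    {α : ℝ} (hα0 : 0 ≤ α) :
    ∫⁻ ω, ENNReal.ofReal (exp (c * Y ω ^ α)) ∂μ
      ≤ ∑' n : ℕ, ENNReal.ofReal (exp (|c| * ((n : ℝ) + 1) ^ α)) * μ {ω | (n : ℝ) ≤ Y ω} := by
  set E : ℕ → Set Ω := fun n => {ω | (n : ℝ) ≤ Y ω}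
  set w : ℕ → ℝ≥0∞ := fun n => ENNReal.ofReal (exp (|c| * ((n : ℝ) + 1) ^ α))
  have hE : ∀ n, MeasurableSet (E n) := fun n => measurableSet_le measurable_const hY
  have h_pointwise : ∀ ω, ENNReal.ofReal (exp (c * Y ω ^ α))
      ≤ ∑' n, (E n).indicator (fun _ => w n) ω := by
    intro ω
    refine le_trans ?_ (ENNReal.le_tsum ⌊Y ω⌋₊)
    rw [Set.indicator_of_mem (show ω ∈ E _ from Nat.floor_le (hY0 ω))]
    refine ENNReal.ofReal_le_ofReal (exp_le_exp.2 ?_)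
    calc c * Y ω ^ α ≤ |c| * Y ω ^ α := by gcongr; exacts [rpow_nonneg (hY0 ω) α, le_abs_self c]
      _ ≤ |c| * ((⌊Y ω⌋₊ : ℝ) + 1) ^ α := by
        gcongr
        exacts [hY0 ω, (Nat.lt_floor_add_one _).le]
  calc ∫⁻ ω, ENNReal.ofReal (exp (c * Y ω ^ α)) ∂μ
      ≤ ∫⁻ ω, ∑' n, (E n).indicator (fun _ => w n) ω ∂μ := lintegral_mono h_pointwise
    _ = _ := by
      rw [lintegral_tsum fun n => (measurable_const.indicator (hE n)).aemeasurable]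
      simp_rw [lintegral_indicator_const (hE _), E, w]

theorem lintegral_exp_mul_rpow_lt_top [IsFiniteMeasure μ] (hY : Measurable Y)
    (hY0 : ∀ ω, 0 ≤ Y ω) {C : ℝ≥0∞} (hC : C ≠ ∞) {a : ℝ} (ha : 0 < a)
    (htail : ∀ s > 0, μ {ω | s ≤ Y ω} ≤ C * ENNReal.ofReal (exp (-a * s ^ 2)))
    (c : ℝ) {α : ℝ} (hα0 : 0 ≤ α) (hα2 : α < 2) :
    ∫⁻ ω, ENNReal.ofReal (exp (c * Y ω ^ α)) ∂μ < ∞ := by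
  set K := max C (μ Set.univ)
  set b : ℕ → ℝ := fun n => exp (|c| * ((n : ℝ) + 1) ^ α - a * (n : ℝ) ^ 2)
  have h_tail : ∀ n : ℕ, μ {ω | (n : ℝ) ≤ Y ω} ≤ K * ENNReal.ofReal (exp (-a * (n : ℝ) ^ 2)) := by
    intro n
    rcases Nat.eq_zero_or_pos n with rfl | hn
    · have h_univ : μ {ω | ((0 : ℕ) : ℝ) ≤ Y ω} ≤ K :=
        (measure_mono (Set.subset_univ _)).trans (le_max_right _ _)
      simpa using h_univ
    · exact (htail n (by exact_mod_cast hn)).trans (by gcongr; exact le_max_left _ _)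
  have h_term : ∀ n : ℕ, ENNReal.ofReal (exp (|c| * ((n : ℝ) + 1) ^ α)) * μ {ω | (n : ℝ) ≤ Y ω}
      ≤ K * ENNReal.ofReal (b n) := fun n => by
    calc _ ≤ ENNReal.ofReal (exp (|c| * ((n : ℝ) + 1) ^ α))
          * (K * ENNReal.ofReal (exp (-a * (n : ℝ) ^ 2))) := by gcongr; exact h_tail n
      _ = K * ENNReal.ofReal (b n) := by
        rw [mul_left_comm, ← ENNReal.ofReal_mul (exp_pos _).le, ← exp_add, neg_mul,
          ← sub_eq_add_neg]
  calc ∫⁻ ω, ENNReal.ofReal (exp (c * Y ω ^ α)) ∂μ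
      ≤ ∑' n : ℕ, K * ENNReal.ofReal (b n) :=
        (lintegral_exp_mul_rpow_le_tsum hY hY0 c hα0).trans (ENNReal.tsum_le_tsum h_term)
    _ = K * ENNReal.ofReal (∑' n, b n) := by
      rw [ENNReal.tsum_mul_left, ENNReal.ofReal_tsum_of_nonneg (fun _ => (exp_pos _).le)
        (summable_exp_mul_add_one_rpow_sub ha hα0 hα2 |c|)]
    _ < ∞ := ENNReal.mul_lt_top (max_ne_top hC (measure_ne_top μ _)).lt_top ENNReal.ofReal_lt_top

end ExpIntegrability

lemma sSup_image_rpow {A : Set ℝ} (hA : A.Nonempty) (hbdd : BddAbove A) (h0 : ∀ x ∈ A, 0 ≤ x)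
    {α : ℝ} (hα : 0 ≤ α) : sSup ((· ^ α) '' A) = sSup A ^ α :=
  (MonotoneOn.map_csSup_of_continuousWithinAt (Real.continuous_rpow_const hα).continuousWithinAt
    (fun _ hx _ _ hxy => rpow_le_rpow (h0 _ hx) hxy hα) hA hbdd).symm

namespace IsStandardBM1

variable {Ω : Type*} [MeasurableSpace Ω] {P : Measure Ω} {T : ℝ} {W : ℝ → Ω → ℝ}

lemma sSup_abs_eq_iSup_gridMax (hW : IsStandardBM1 P T W) (hT : 0 ≤ T) (ω : Ω) :
    sSup ((fun t => |W t ω|) '' Set.Icc 0 T) = ⨆ N : ℕ, gridMax (fun t => |W t ω|) T (2 ^ N) :=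
  sSup_image_Icc_eq_iSup_gridMax hT (hW.2.2.2.2 ω).abs

lemma measurable_sSup_abs (hW : IsStandardBM1 P T W) (hT : 0 ≤ T) :
    Measurable fun ω => sSup ((fun t => |W t ω|) '' Set.Icc 0 T) := by
  simp_rw [hW.sSup_abs_eq_iSup_gridMax hT]
  exact .iSup fun N => measurable_range_sup'' fun k hk =>
    (hW.1 _ (grid_mem_Icc hT hk)).abs

variable [IsProbabilityMeasure P]

lemma map_sub (hW : IsStandardBM1 P T W) {s t : ℝ} (hs : 0 ≤ s) (hst : s ≤ t) (htT : t ≤ T) :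
    P.map (fun ω => W t ω - W s ω) = gaussianReal 0 (t - s).toNNReal := by
  rcases hst.lt_or_eq with hst | rfl
  · exact hW.2.2.2.1 s t hs hst htT
  · simp [Measure.map_const, gaussianReal_zero_var]

lemma hasSubgaussianMGF_sub (hW : IsStandardBM1 P T W) {s t : ℝ} (hs : 0 ≤ s) (hst : s ≤ t)
    (htT : t ≤ T) {v : ℝ≥0} (hTv : T ≤ v) :
    HasSubgaussianMGF (fun ω => W t ω - W s ω) v P := by
  have h_meas : Measurable fun ω => W t ω - W s ω :=
    (hW.1 t ⟨hs.trans hst, htT⟩).sub (hW.1 s ⟨hs, hst.trans htT⟩)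
  rw [← HasSubgaussianMGF.id_map_iff h_meas.aemeasurable, hW.map_sub hs hst htT]
  refine hasSubgaussianMGF_id_gaussianReal ?_
  rw [← NNReal.coe_le_coe, Real.coe_toNNReal']
  exact max_le (by linarith) v.2

lemma measure_le_gridMax_le (hW : IsStandardBM1 P T W) (hT : 0 ≤ T) {v : ℝ≥0} (hTv : T ≤ v)
    (n : ℕ) {r : ℝ} (hr : 0 ≤ r) :
    P {ω | 3 * r ≤ gridMax (fun t => |W t ω|) T n}
      ≤ 6 * ENNReal.ofReal (exp (-r ^ 2 / (2 * v))) := by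
  set X : ℕ → Ω → ℝ := fun i ω => W ((i + 1 : ℕ) * T / n) ω - W (i * T / n) ω
  have hX : ∀ i : Fin n, Measurable (X i) := fun i =>
    (hW.1 _ (grid_mem_Icc hT i.2)).sub (hW.1 _ (grid_mem_Icc hT i.2.le))
  have hind : iIndepFun (fun i : Fin n => X i) P := by
    convert hW.2.2.1 n (fun i => (i : ℕ) * T / n) (fun i j hij => by dsimp only; gcongr; exact hij)
      (fun i => grid_mem_Icc hT (Nat.lt_succ_iff.1 i.2)) using 1
    ext i ω
    simp [X]
  have h_telescope : ∀ k ω, ∑ i ∈ range k, X i ω = W (k * T / n) ω - W 0 ω := fun k ω => by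
    rw [sum_range_sub (fun i => W (i * T / n) ω)]
    simp
  have htail : ∀ k ≤ n, P {ω | r ≤ |∑ i ∈ range k, X i ω|}
      ≤ 2 * ENNReal.ofReal (exp (-r ^ 2 / (2 * v))) := fun k hk => by
    simp_rw [h_telescope]
    exact (hW.hasSubgaussianMGF_sub le_rfl (grid_mem_Icc hT hk).1 (grid_mem_Icc hT hk).2
      hTv).measure_le_abs_le hr
  calc P {ω | 3 * r ≤ gridMax (fun t => |W t ω|) T n}
      ≤ P {ω | ∃ k ≤ n, 3 * r ≤ |∑ i ∈ range k, X i ω|} := by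
        refine measure_mono_ae ?_
        filter_upwards [hW.2.1] with ω h0 hω
        obtain ⟨k, hk, hk'⟩ := (le_sup'_iff _).1 hω
        exact ⟨k, Nat.lt_succ_iff.1 (mem_range.1 hk), by rwa [h_telescope, h0, sub_zero]⟩
    _ ≤ 3 * (2 * ENNReal.ofReal (exp (-r ^ 2 / (2 * v)))) := etemadi_maximal_ineq hX hind htail
    _ = 6 * ENNReal.ofReal (exp (-r ^ 2 / (2 * v))) := by rw [← mul_assoc]; norm_num

lemma measure_le_sSup_abs_le (hW : IsStandardBM1 P T W) (hT : 0 ≤ T) {v : ℝ≥0} (hTv : T ≤ v)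
    {s : ℝ} (hs : 0 < s) :
    P {ω | s ≤ sSup ((fun t => |W t ω|) '' Set.Icc 0 T)}
      ≤ 6 * ENNReal.ofReal (exp (-(72 * (v : ℝ))⁻¹ * s ^ 2)) := by
  set M : ℕ → Ω → ℝ := fun N ω => gridMax (fun t => |W t ω|) T (2 ^ N)
  have h_sub : {ω | s ≤ sSup ((fun t => |W t ω|) '' Set.Icc 0 T)}
      ⊆ ⋃ N, {ω | 3 * (s / 6) ≤ M N ω} := fun ω hω => by
    have hbdd : BddAbove (Set.range fun N => M N ω) :=
      ⟨_, Set.forall_mem_range.2 fun N => gridMax_le_sSup hT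
        (isCompact_Icc.image_of_continuousOn (hW.2.2.2.2 ω).abs).bddAbove _⟩
    rw [Set.mem_ofPred_eq, hW.sSup_abs_eq_iSup_gridMax hT] at hω
    obtain ⟨N, hN⟩ := (lt_ciSup_iff hbdd).1 (by linarith : s / 2 < ⨆ N, M N ω)
    exact Set.mem_iUnion.2 ⟨N, by simp only [Set.mem_ofPred_eq]; linarith⟩
  have h_mono : Monotone fun N => {ω | 3 * (s / 6) ≤ M N ω} := fun N N' h ω hω =>
    le_trans hω (monotone_gridMax_two_pow h)
  calc P {ω | s ≤ sSup ((fun t => |W t ω|) '' Set.Icc 0 T)}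
      ≤ ⨆ N, P {ω | 3 * (s / 6) ≤ M N ω} := (measure_mono h_sub).trans_eq h_mono.measure_iUnion
    _ ≤ 6 * ENNReal.ofReal (exp (-(s / 6) ^ 2 / (2 * v))) :=
      iSup_le fun N => hW.measure_le_gridMax_le hT hTv _ (by positivity)
    _ = 6 * ENNReal.ofReal (exp (-(72 * (v : ℝ))⁻¹ * s ^ 2)) := by ring_nf

end IsStandardBM1

theorem brownian_one_dim_exp_sup_finite
    (T c α : ℝ) (hT : 0 ≤ T) (hα0 : 0 ≤ α) (hα2 : α < 2)
    {Ω : Type*} [MeasurableSpace Ω] (P : Measure Ω) [IsProbabilityMeasure P]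
    (W : ℝ → Ω → ℝ) (hW : IsStandardBM1 P T W) :
    Measurable (fun ω => sSup ((fun t => |W t ω| ^ α) '' Set.Icc (0 : ℝ) T)) ∧
    (∫⁻ ω, ENNReal.ofReal (Real.exp (c *
      sSup ((fun t => |W t ω| ^ α) '' Set.Icc (0 : ℝ) T))) ∂P) < ⊤ := by
  set Y : Ω → ℝ := fun ω => sSup ((fun t => |W t ω|) '' Set.Icc 0 T)
  have hY0 : ∀ ω, 0 ≤ Y ω := fun ω => Real.sSup_nonneg fun _ ⟨_, _, h⟩ => h ▸ abs_nonneg _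
  have hY : ∀ ω, sSup ((fun t => |W t ω| ^ α) '' Set.Icc 0 T) = Y ω ^ α := fun ω => by
    rw [← Set.image_image (· ^ α) (fun t => |W t ω|)]
    exact sSup_image_rpow ((Set.nonempty_Icc.2 hT).image _)
      (isCompact_Icc.image_of_continuousOn (hW.2.2.2.2 ω).abs).bddAbove
      (fun _ ⟨_, _, h⟩ => h ▸ abs_nonneg _) hα0
  simp_rw [hY]
  -- the variance bound `T + 1` rather than `T` keeps the Gaussian rate positive when `T = 0`
  set v : ℝ≥0 := T.toNNReal + 1
  have hTv : T ≤ v := (Real.le_coe_toNNReal T).trans (by simp [v])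
  exact ⟨(hW.measurable_sSup_abs hT).pow_const α,
    lintegral_exp_mul_rpow_lt_top (hW.measurable_sSup_abs hT) hY0 (by norm_num) (by positivity)
      (fun s hs => hW.measure_le_sSup_abs_le hT hTv hs) c hα0 hα2⟩
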